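/- For the pure-birth two-type model with α_A + ν = α_B (neutral mutation), β_A = β_B = 0, and one initial wildtype cell, the number of mutants at total population size n satisfies P(B(σ_n) = k) = Σ_{i=1}^{n-k} (-1)^{n-i} C(n-k-1, i-1) · C(i·α_A/α_B - 1, n-1), where C(x, m) is the generalized binomial coefficient. -/

import Mathlib

/-!
The right-hand side, written `angererSum p m a` for `m` steps and `a + 1` wildtype cells, obeys
the same one-step recursion as the law of the chain on the states `(a + 1, b)` with `a + b = m`.
Termwise this is `C(x, m + 1) = C(x, m) (x - m) / (m + 1)` combined with
`C(a, j) (a + 1) = C(a + 1, j) (a + 1 - j)`. The one boundary term, `angererSum p m (m + 1)`,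
is an `(m + 1)`-st finite difference of the degree-`m` polynomial `j ↦ C((j + 1) p - 1, m)`,
hence zero.
-/

/-- Generalized binomial coefficient `C(x, m) = x(x-1)⋯(x-m+1)/m!` for real `x`. -/
noncomputable def genChoose (x : ℝ) (m : ℕ) : ℝ :=
  (∏ j ∈ Finset.range m, (x - j)) / (Nat.factorial m : ℝ)

/-- Marginal law of the embedded jump chain of the pure-birth two-type model:
`twoTypeLaw p m (i, j)` is the probability that, started from `(1,0)`, after `m` steps the
chain is in state `(i, j)`, where from `(i, j)` the next state is `(i+1, j)` with
probability `i p/(i+j)` and `(i, j+1)` with probability `1 - i p/(i+j)`. -/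
noncomputable def twoTypeLaw (p : ℝ) : ℕ → ℕ × ℕ → ℝ
  | 0 => fun s => if s = (1, 0) then 1 else 0
  | m + 1 => fun s =>
      (if 2 ≤ s.1 then
        twoTypeLaw p m (s.1 - 1, s.2) *
          (((s.1 : ℝ) - 1) * p / (((s.1 : ℝ) - 1) + s.2))
      else 0) +
      (if 1 ≤ s.2 then
        twoTypeLaw p m (s.1, s.2 - 1) *
          (1 - (s.1 : ℝ) * p / ((s.1 : ℝ) + s.2 - 1))
      else 0)

open Finset Polynomial

lemma genChoose_succ (x : ℝ) (m : ℕ) :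
    genChoose x (m + 1) = genChoose x m * (x - m) / (m + 1) := by
  rw [genChoose, genChoose, prod_range_succ, Nat.factorial_succ]
  push_cast
  field_simp

lemma genChoose_eq_descPochhammer_eval (x : ℝ) (m : ℕ) :
    genChoose x m = (descPochhammer ℝ m).eval x / m.factorial := by
  rw [genChoose, descPochhammer_eval_eq_prod_range]

theorem Polynomial.sum_range_neg_one_pow_mul_choose_mul_eval_add_eq_zero {R : Type*}
    [CommRing R] {P : R[X]} {N : ℕ} (hP : P.natDegree < N) (y : R) :
    ∑ k ∈ range (N + 1), (-1) ^ k * N.choose k * P.eval (y + k) = 0 := by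
  have h := congrFun (fwdDiff_iter_eq_zero_of_degree_lt hP) y
  rw [fwdDiff_iter_eq_sum_shift, Pi.zero_apply] at h
  calc ∑ k ∈ range (N + 1), (-1) ^ k * N.choose k * P.eval (y + k)
      = (-1) ^ N *
          ∑ k ∈ range (N + 1), ((-1 : ℤ) ^ (N - k) * N.choose k) • P.eval (y + k • 1) := by
        rw [mul_sum]
        refine sum_congr rfl fun k hk => ?_
        have hkN : k ≤ N := Nat.lt_succ_iff.mp (mem_range.mp hk)
        rw [zsmul_eq_mul, nsmul_one]
        push_cast
        rw [← mul_assoc, ← mul_assoc, ← pow_add, show N + (N - k) = k + 2 * (N - k) by omega,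
          pow_add, pow_mul, neg_one_sq, one_pow, mul_one]
    _ = 0 := by rw [h, mul_zero]

/-- The right-hand side of the theorem for `n = m + 1` and `n - k = a + 1`, reindexed by
`i = j + 1`. -/
noncomputable def angererSum (p : ℝ) (m a : ℕ) : ℝ :=
  ∑ j ∈ range (a + 1), (-1) ^ (m + j) * a.choose j * genChoose ((j + 1) * p - 1) m

lemma angererSum_succ_zero (p : ℝ) (m : ℕ) :
    angererSum p (m + 1) 0 = angererSum p m 0 * (1 - p / (m + 1)) := by
  simp only [angererSum, zero_add, sum_range_one, Nat.choose_self, Nat.cast_one, mul_one,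
    genChoose_succ]
  field_simp
  ring

lemma angererSum_succ_succ (p : ℝ) (m a : ℕ) :
    angererSum p (m + 1) (a + 1) = angererSum p m a * ((a + 1) * p / (m + 1))
      + angererSum p m (a + 1) * (1 - (a + 2) * p / (m + 1)) := by
  have hext : angererSum p m a =
      ∑ j ∈ range (a + 2), (-1) ^ (m + j) * a.choose j * genChoose ((j + 1) * p - 1) m := by
    rw [sum_range_succ _ (a + 1), Nat.choose_succ_self, Nat.cast_zero, mul_zero, zero_mul,
      add_zero, angererSum]
  rw [hext, angererSum, angererSum, sum_mul, sum_mul, ← sum_add_distrib]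
  refine sum_congr rfl fun j hj => ?_
  have hpascal : (a.choose j : ℝ) * (a + 1) = (a + 1).choose j * (a + 1 - j) := by
    have h := congrArg (Nat.cast : ℕ → ℝ) (Nat.choose_mul_succ_eq a j)
    push_cast [Nat.cast_sub (Nat.lt_succ_iff.mp (mem_range.mp hj))] at h
    exact h
  rw [genChoose_succ, add_right_comm, pow_succ]
  field_simp
  linear_combination (-(genChoose ((j + 1) * p - 1) m * p)) * hpascal

lemma angererSum_self_succ (p : ℝ) (m : ℕ) : angererSum p m (m + 1) = 0 := by
  set P : ℝ[X] := (descPochhammer ℝ m).comp (C p * X + C (p - 1))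
  have hP : P.natDegree < m + 1 := by
    calc P.natDegree ≤ (descPochhammer ℝ m).natDegree * (C p * X + C (p - 1)).natDegree :=
          natDegree_comp_le
      _ ≤ m * 1 := by rw [descPochhammer_natDegree]; gcongr; exact natDegree_linear_le
      _ < m + 1 := by omega
  have hvanish := sum_range_neg_one_pow_mul_choose_mul_eval_add_eq_zero hP 0
  calc angererSum p m (m + 1)
      = (-1) ^ m / m.factorial *
          ∑ j ∈ range (m + 2), (-1) ^ j * (m + 1).choose j * P.eval ((0 : ℝ) + j) := by
        rw [angererSum, mul_sum]
        refine sum_congr rfl fun j _ => ?_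
        simp only [P, genChoose_eq_descPochhammer_eval, eval_comp, eval_add, eval_mul, eval_C,
          eval_X, pow_add, zero_add]
        ring_nf
    _ = 0 := by rw [hvanish, mul_zero]

lemma twoTypeLaw_succ_add_one_add_one (p : ℝ) (m a b : ℕ) :
    twoTypeLaw p (m + 1) (a + 1, b + 1) =
      twoTypeLaw p m (a, b + 1) * (a * p / (a + b + 1))
        + twoTypeLaw p m (a + 1, b) * (1 - (a + 1) * p / (a + b + 1)) := by
  rcases a with _ | a
  · simp [twoTypeLaw]
  · simp only [twoTypeLaw, le_add_iff_nonneg_left, zero_le, ↓reduceIte, add_tsub_cancel_right,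
      Nat.cast_add, Nat.cast_one]
    ring

lemma twoTypeLaw_succ_add_two_zero (p : ℝ) (m a : ℕ) :
    twoTypeLaw p (m + 1) (a + 2, 0) = twoTypeLaw p m (a + 1, 0) * p := by
  have ha : (a : ℝ) + 2 - 1 ≠ 0 := by linarith [a.cast_nonneg (α := ℝ)]
  simp [twoTypeLaw, ha]

lemma twoTypeLaw_eq_angererSum (p : ℝ) (m a b : ℕ) (hab : a + b = m) :
    twoTypeLaw p m (a + 1, b) = angererSum p m a := by
  induction m generalizing a b with
  | zero =>
    obtain ⟨rfl, rfl⟩ : a = 0 ∧ b = 0 := by omega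
    simp [twoTypeLaw, angererSum, genChoose]
  | succ m ih =>
    rcases a with _ | a <;> rcases b with _ | b
    · omega
    · obtain rfl : b = m := by omega
      rw [twoTypeLaw_succ_add_one_add_one, ih 0 b (zero_add b), angererSum_succ_zero]
      simp
    · obtain rfl : a = m := by omega
      rw [twoTypeLaw_succ_add_two_zero, ih a 0 rfl, angererSum_succ_succ, angererSum_self_succ]
      field_simp
      ring
    · rw [twoTypeLaw_succ_add_one_add_one, ih (a + 1) b (by omega), ih a (b + 1) (by omega),
        angererSum_succ_succ]
      have hm : (a : ℝ) + 1 + b + 1 = m + 1 := by exact_mod_cast hab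
      push_cast
      rw [hm]
      ring

theorem stmt_17_general (αA αB : ℝ)
    (n k : ℕ) (hn : 1 ≤ n) (hk : k ≤ n - 1) :
    twoTypeLaw (αA / αB) (n - 1) (n - k, k)
      = ∑ i ∈ Finset.Icc 1 (n - k),
          (-1 : ℝ) ^ (n - i) * ((n - k - 1).choose (i - 1)) *
            genChoose ((i : ℝ) * αA / αB - 1) (n - 1) := by
  obtain ⟨m, rfl⟩ : ∃ m, n = m + 1 := ⟨n - 1, by omega⟩
  obtain ⟨a, rfl⟩ : ∃ a, m = a + k := ⟨m - k, by omega⟩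
  simp only [show a + k + 1 - k = a + 1 by omega, Nat.add_sub_cancel]
  rw [twoTypeLaw_eq_angererSum _ _ a k rfl, angererSum, range_eq_Ico, ← Ico_add_one_right_eq_Icc,
    ← sum_Ico_add' _ 0 (a + 1) 1]
  refine sum_congr rfl fun j hj => ?_
  have hja : j ≤ a := Nat.lt_succ_iff.mp (mem_Ico.mp hj).2
  have hsign : (-1 : ℝ) ^ (a + k + j) = (-1) ^ (a + k + 1 - (j + 1)) := by
    rw [show a + k + j = a + k + 1 - (j + 1) + 2 * j by omega, pow_add, pow_mul, neg_one_sq,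
      one_pow, mul_one]
  rw [hsign, Nat.add_sub_cancel j 1, Nat.cast_succ, mul_div_assoc]

/-- Angerer's formula: in the pure-birth two-type model with `α_B = α_A + ν` (neutral
mutation), no deaths, and one initial wildtype cell, the number of mutants at total
population size `n` satisfies
`P(B(σ_n) = k) = Σ_{i=1}^{n-k} (-1)^{n-i} C(n-k-1, i-1) C(i α_A/α_B - 1, n-1)`. -/
theorem stmt_17 (αA ν αB : ℝ) (hα : 0 < αA) (hν : 0 < ν) (hB : αB = αA + ν)
    (n k : ℕ) (hn : 1 ≤ n) (hk : k ≤ n - 1) :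
    twoTypeLaw (αA / αB) (n - 1) (n - k, k)
      = ∑ i ∈ Finset.Icc 1 (n - k),
          (-1 : ℝ) ^ (n - i) * ((n - k - 1).choose (i - 1)) *
            genChoose ((i : ℝ) * αA / αB - 1) (n - 1) :=
  stmt_17_general αA αB n k hn hk
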